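/- Simulation of β-reduction by the ♮-translation: if Γ ⊢ M : τ @A in λMD and M →β N (compatible closure of (λx:τ.M) N →β M[x↦N]), then ♮(M) →β⁺ ♮(N) in the simply typed λ-calculus, i.e., ♮(M) reduces to ♮(N) in one or more β-steps. -/

import Mathlib

namespace LMD

/-- Stage variables are names; a stage is a finite sequence of stage variables. -/
abbrev SVar := String
abbrev Stage := List SVar

mutual
/-- Kinds of λMD: `*` and `Πx:τ.K`. -/
inductive Kind : Type where
  | star : Kind
  | pi (x : String) (τ : Ty) (K : Kind) : Kind

/-- Types of λMD: type constants, dependent products, applications to terms,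
code types `▷_α τ` and `∀α.τ`. -/
inductive Ty : Type where
  | const (X : String) : Ty
  | pi (x : String) (τ σ : Ty) : Ty
  | app (τ : Ty) (M : Tm) : Ty
  | code (α : SVar) (τ : Ty) : Ty
  | all (α : SVar) (τ : Ty) : Ty

/-- Terms of λMD. -/
inductive Tm : Type where
  | const (c : String) : Tm
  | var (x : String) : Tm
  | lam (x : String) (τ : Ty) (M : Tm) : Tm
  | app (M N : Tm) : Tm
  | quote (α : SVar) (M : Tm) : Tm    -- ▸_α M  (bracket)
  | escape (α : SVar) (M : Tm) : Tm   -- ◂_α M  (escape)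
  | gen (α : SVar) (M : Tm) : Tm      -- Λα.M
  | inst (M : Tm) (A : Stage) : Tm    -- M A  (stage application)
  | csp (α : SVar) (M : Tm) : Tm      -- %_α M  (cross-stage persistence)
end

/-- `▸_{α1…αn} M = ▸_{α1} … ▸_{αn} M`. -/
def quotes (A : Stage) (M : Tm) : Tm := List.foldr Tm.quote M A
/-- `◂_{α1…αn} M = ◂_{αn} … ◂_{α1} M`. -/
def escapes (A : Stage) (M : Tm) : Tm := List.foldl (fun m α => Tm.escape α m) M A
/-- `%_{α1…αn} M = %_{αn} … %_{α1} M`. -/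
def csps (A : Stage) (M : Tm) : Tm := List.foldl (fun m α => Tm.csp α m) M A
/-- `▷_{α1…αn} τ = ▷_{α1} … ▷_{αn} τ`. -/
def codes (A : Stage) (τ : Ty) : Ty := List.foldr Ty.code τ A

/-- Substitution of stage `B` for stage variable `β` in a stage. -/
def substStage (A : Stage) (β : SVar) (B : Stage) : Stage :=
  List.foldr (fun α acc => (if α = β then B else [α]) ++ acc) [] A

mutual
/-- Free stage variables of a kind. -/
def fsvKind : Kind → Finset String
  | .star => ∅
  | .pi _ τ K => fsvTy τ ∪ fsvKind K

/-- Free stage variables of a type. -/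
def fsvTy : Ty → Finset String
  | .const _ => ∅
  | .pi _ τ σ => fsvTy τ ∪ fsvTy σ
  | .app τ M => fsvTy τ ∪ fsvTm M
  | .code α τ => insert α (fsvTy τ)
  | .all α τ => fsvTy τ \ {α}

/-- Free stage variables of a term. -/
def fsvTm : Tm → Finset String
  | .const _ => ∅
  | .var _ => ∅
  | .lam _ τ M => fsvTy τ ∪ fsvTm M
  | .app M N => fsvTm M ∪ fsvTm N
  | .quote α M => insert α (fsvTm M)
  | .escape α M => insert α (fsvTm M)
  | .gen α M => fsvTm M \ {α}
  | .inst M A => fsvTm M ∪ A.toFinset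
  | .csp α M => insert α (fsvTm M)
end

mutual
/-- Substitution of term `P` for variable `z` in a term. -/
def substTm : Tm → String → Tm → Tm
  | .const c, _, _ => .const c
  | .var y, z, P => if y = z then P else .var y
  | .lam y τ M, z, P => .lam y (substTy τ z P) (if y = z then M else substTm M z P)
  | .app M N, z, P => .app (substTm M z P) (substTm N z P)
  | .quote α M, z, P => .quote α (substTm M z P)
  | .escape α M, z, P => .escape α (substTm M z P)
  | .gen α M, z, P => .gen α (substTm M z P)
  | .inst M A, z, P => .inst (substTm M z P) A
  | .csp α M, z, P => .csp α (substTm M z P)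

/-- Substitution of term `P` for variable `z` in a type. -/
def substTy : Ty → String → Tm → Ty
  | .const X, _, _ => .const X
  | .pi y τ σ, z, P => .pi y (substTy τ z P) (if y = z then σ else substTy σ z P)
  | .app τ M, z, P => .app (substTy τ z P) (substTm M z P)
  | .code α τ, z, P => .code α (substTy τ z P)
  | .all α τ, z, P => .all α (substTy τ z P)

/-- Substitution of term `P` for variable `z` in a kind. -/
def substKind : Kind → String → Tm → Kind
  | .star, _, _ => .star
  | .pi y τ K, z, P => .pi y (substTy τ z P) (if y = z then K else substKind K z P)
end

mutual
/-- Substitution of stage `B` for stage variable `β` in a term. -/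
def ssubTm : Tm → SVar → Stage → Tm
  | .const c, _, _ => .const c
  | .var y, _, _ => .var y
  | .lam y τ M, β, B => .lam y (ssubTy τ β B) (ssubTm M β B)
  | .app M N, β, B => .app (ssubTm M β B) (ssubTm N β B)
  | .quote α M, β, B => quotes (if α = β then B else [α]) (ssubTm M β B)
  | .escape α M, β, B => escapes (if α = β then B else [α]) (ssubTm M β B)
  | .gen α M, β, B => if α = β then .gen α M else .gen α (ssubTm M β B)
  | .inst M A, β, B => .inst (ssubTm M β B) (substStage A β B)
  | .csp α M, β, B => csps (if α = β then B else [α]) (ssubTm M β B)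

/-- Substitution of stage `B` for stage variable `β` in a type. -/
def ssubTy : Ty → SVar → Stage → Ty
  | .const X, _, _ => .const X
  | .pi y τ σ, β, B => .pi y (ssubTy τ β B) (ssubTy σ β B)
  | .app τ M, β, B => .app (ssubTy τ β B) (ssubTm M β B)
  | .code α τ, β, B => codes (if α = β then B else [α]) (ssubTy τ β B)
  | .all α τ, β, B => if α = β then .all α τ else .all α (ssubTy τ β B)

/-- Substitution of stage `B` for stage variable `β` in a kind. -/
def ssubKind : Kind → SVar → Stage → Kind
  | .star, _, _ => .star
  | .pi y τ K, β, B => .pi y (ssubTy τ β B) (ssubKind K β B)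
end

/-- A signature declares kinds of type-level constants and types of constants. -/
structure Sig : Type where
  tycs : List (String × Kind)
  consts : List (String × Ty)

/-- A type environment is a sequence of declarations `x:τ@A`
(`Γ, x:τ@A` is represented by appending on the right). -/
abbrev Ctx := List (String × Ty × Stage)

/-- Free stage variables of a type environment. -/
def fsvCtx (Γ : Ctx) : Finset String :=
  Γ.foldr (fun e s => fsvTy e.2.1 ∪ e.2.2.toFinset ∪ s) ∅

/-- Domain of a type environment. -/
def domCtx (Γ : Ctx) : List String := Γ.map (·.1)

/-- Substitution of a term for a variable, pointwise in the types of an environment. -/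
def substCtx (Γ : Ctx) (z : String) (P : Tm) : Ctx :=
  Γ.map (fun e => (e.1, substTy e.2.1 z P, e.2.2))

/-- Substitution of a stage for a stage variable throughout an environment. -/
def ssubCtx (Γ : Ctx) (β : SVar) (B : Stage) : Ctx :=
  Γ.map (fun e => (e.1, ssubTy e.2.1 β B, substStage e.2.2 β B))

mutual
/-- Kind well-formedness `Γ ⊢ K kind @A`. -/
inductive WfKind : Sig → Ctx → Kind → Stage → Prop where
  | star : WfKind S Γ .star A
  | pi : Kinding S Γ τ .star A → WfKind S (Γ ++ [(x, τ, A)]) K A →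
      WfKind S Γ (.pi x τ K) A

/-- Kinding `Γ ⊢ τ :: K @A`. -/
inductive Kinding : Sig → Ctx → Ty → Kind → Stage → Prop where
  | tconst : (X, K) ∈ S.tycs → Kinding S Γ (.const X) K A
  | pi : Kinding S Γ τ .star A → Kinding S (Γ ++ [(x, τ, A)]) σ J A →
      Kinding S Γ (.pi x τ σ) (.pi x τ J) A
  | app : Kinding S Γ σ (.pi x τ K) A → Typing S Γ M τ A →
      Kinding S Γ (.app σ M) (substKind K x M) A
  | conv : Kinding S Γ τ K A → KEq S Γ K J A → Kinding S Γ τ J A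
  | code : Kinding S Γ τ .star (A ++ [α]) → Kinding S Γ (.code α τ) .star A
  | gen : Kinding S Γ τ K A → α ∉ fsvCtx Γ ∪ A.toFinset →
      Kinding S Γ (.all α τ) K A
  | csp : Kinding S Γ τ .star A → Kinding S Γ τ .star (A ++ [α])

/-- Typing `Γ ⊢ M : τ @A`. -/
inductive Typing : Sig → Ctx → Tm → Ty → Stage → Prop where
  | const : (c, τ) ∈ S.consts → Typing S Γ (.const c) τ A
  | var : (x, τ, A) ∈ Γ → Typing S Γ (.var x) τ A
  | lam : Kinding S Γ σ .star A → Typing S (Γ ++ [(x, σ, A)]) M τ A →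
      Typing S Γ (.lam x σ M) (.pi x σ τ) A
  | app : Typing S Γ M (.pi x σ τ) A → Typing S Γ N σ A →
      Typing S Γ (.app M N) (substTy τ x N) A
  | conv : Typing S Γ M τ A → TyEq S Γ τ σ K A → Typing S Γ M σ A
  | quote : Typing S Γ M τ (A ++ [α]) → Typing S Γ (.quote α M) (.code α τ) A
  | escape : Typing S Γ M (.code α τ) A → Typing S Γ (.escape α M) τ (A ++ [α])
  | gen : Typing S Γ M τ A → α ∉ fsvCtx Γ ∪ A.toFinset →
      Typing S Γ (.gen α M) (.all α τ) A
  | inst : Typing S Γ M (.all α τ) A → Typing S Γ (.inst M B) (ssubTy τ α B) A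
  | csp : Typing S Γ M τ A → Typing S Γ (.csp α M) τ (A ++ [α])

/-- Kind equivalence `Γ ⊢ K ≡ J @A`. -/
inductive KEq : Sig → Ctx → Kind → Kind → Stage → Prop where
  | pi : TyEq S Γ τ σ .star A → KEq S (Γ ++ [(x, τ, A)]) K J A →
      KEq S Γ (.pi x τ K) (.pi x σ J) A
  | csp : KEq S Γ K J A → KEq S Γ K J (A ++ [α])
  | refl : WfKind S Γ K A → KEq S Γ K K A
  | symm : KEq S Γ K J A → KEq S Γ J K A
  | trans : KEq S Γ K J A → KEq S Γ J I A → KEq S Γ K I A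

/-- Type equivalence `Γ ⊢ τ ≡ σ :: K @A`. -/
inductive TyEq : Sig → Ctx → Ty → Ty → Kind → Stage → Prop where
  | pi : TyEq S Γ τ σ .star A → TyEq S (Γ ++ [(x, τ, A)]) ρ π .star A →
      TyEq S Γ (.pi x τ ρ) (.pi x σ π) .star A
  | app : TyEq S Γ τ σ (.pi x ρ K) A → TmEq S Γ M N ρ A →
      TyEq S Γ (.app τ M) (.app σ N) (substKind K x M) A
  | code : TyEq S Γ τ σ .star (A ++ [α]) →
      TyEq S Γ (.code α τ) (.code α σ) .star A
  | gen : TyEq S Γ τ σ .star A → α ∉ fsvCtx Γ ∪ A.toFinset →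
      TyEq S Γ (.all α τ) (.all α σ) .star A
  | csp : TyEq S Γ τ σ .star A → TyEq S Γ τ σ .star (A ++ [α])
  | refl : Kinding S Γ τ K A → TyEq S Γ τ τ K A
  | symm : TyEq S Γ τ σ K A → TyEq S Γ σ τ K A
  | trans : TyEq S Γ τ σ K A → TyEq S Γ σ ρ K A → TyEq S Γ τ ρ K A

/-- Term equivalence `Γ ⊢ M ≡ N : τ @A`. -/
inductive TmEq : Sig → Ctx → Tm → Tm → Ty → Stage → Prop where
  | lam : TyEq S Γ τ σ .star A → TmEq S (Γ ++ [(x, τ, A)]) M N ρ A →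
      TmEq S Γ (.lam x τ M) (.lam x σ N) (.pi x τ ρ) A
  | app : TmEq S Γ M L (.pi x σ τ) A → TmEq S Γ N O σ A →
      TmEq S Γ (.app M N) (.app L O) (substTy τ x N) A
  | quote : TmEq S Γ M N τ (A ++ [α]) →
      TmEq S Γ (.quote α M) (.quote α N) (.code α τ) A
  | escape : TmEq S Γ M N (.code α τ) A →
      TmEq S Γ (.escape α M) (.escape α N) τ (A ++ [α])
  | gen : TmEq S Γ M N τ A → α ∉ fsvCtx Γ ∪ A.toFinset →
      TmEq S Γ (.gen α M) (.gen α N) (.all α τ) A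
  | inst : TmEq S Γ M N (.all α τ) A →
      TmEq S Γ (.inst M B) (.inst N B) (ssubTy τ α B) A
  | csp : TmEq S Γ M N τ A → TmEq S Γ (.csp α M) (.csp α N) τ (A ++ [α])
  | refl : Typing S Γ M τ A → TmEq S Γ M M τ A
  | symm : TmEq S Γ M N τ A → TmEq S Γ N M τ A
  | trans : TmEq S Γ M N τ A → TmEq S Γ N L τ A → TmEq S Γ M L τ A
  | beta : Typing S (Γ ++ [(x, σ, A)]) M τ A → Typing S Γ N σ A →
      TmEq S Γ (.app (.lam x σ M) N) (substTm M x N) (substTy τ x N) A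
  | splice : TmEq S Γ M N τ A → TmEq S Γ (.escape α (.quote α M)) N τ A
  | lamApp : Typing S Γ (.gen α M) (.all α τ) A →
      TmEq S Γ (.inst (.gen α M) B) (ssubTm M α B) (ssubTy τ α B) A
  | percent : Typing S Γ M τ (A ++ [α]) → Typing S Γ M τ A →
      TmEq S Γ (.csp α M) M τ (A ++ [α])
end

/-- Type environment well-formedness `⊢ Γ`. -/
inductive WfEnv : Sig → Ctx → Prop where
  | nil : WfEnv S []
  | cons : WfEnv S Γ → Kinding S Γ τ .star A → x ∉ domCtx Γ →
      WfEnv S (Γ ++ [(x, τ, A)])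

/-- Full reduction: compatible closure of β-, ♦-, and Λ-reduction. -/
inductive Red : Tm → Tm → Prop where
  | beta : Red (.app (.lam x τ M) N) (substTm M x N)
  | splice : Red (.escape α (.quote α M)) M
  | lamApp : Red (.inst (.gen α M) A) (ssubTm M α A)
  | lam : Red M M' → Red (.lam x τ M) (.lam x τ M')
  | appL : Red M M' → Red (.app M N) (.app M' N)
  | appR : Red N N' → Red (.app M N) (.app M N')
  | quote : Red M M' → Red (.quote α M) (.quote α M')
  | escape : Red M M' → Red (.escape α M) (.escape α M')
  | gen : Red M M' → Red (.gen α M) (.gen α M')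
  | inst : Red M M' → Red (.inst M A) (.inst M' A)
  | csp : Red M M' → Red (.csp α M) (.csp α M')

/-- β-reduction alone (compatible closure). -/
inductive RedB : Tm → Tm → Prop where
  | beta : RedB (.app (.lam x τ M) N) (substTm M x N)
  | lam : RedB M M' → RedB (.lam x τ M) (.lam x τ M')
  | appL : RedB M M' → RedB (.app M N) (.app M' N)
  | appR : RedB N N' → RedB (.app M N) (.app M N')
  | quote : RedB M M' → RedB (.quote α M) (.quote α M')
  | escape : RedB M M' → RedB (.escape α M) (.escape α M')
  | gen : RedB M M' → RedB (.gen α M) (.gen α M')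
  | inst : RedB M M' → RedB (.inst M A) (.inst M' A)
  | csp : RedB M M' → RedB (.csp α M) (.csp α M')

/-- The family of sets of values `V^A`. -/
inductive Value : Stage → Tm → Prop where
  | lam0 : Value [] (.lam x τ M)
  | quote0 : Value [α] M → Value [] (.quote α M)
  | gen0 : Value [] M → Value [] (.gen α M)
  | var : A ≠ [] → Value A (.var x)
  | lam : A ≠ [] → Value A M → Value A (.lam x τ M)
  | app : A ≠ [] → Value A M → Value A N → Value A (.app M N)
  | quote : A ≠ [] → Value (A ++ [α]) M → Value A (.quote α M)
  | gen : A ≠ [] → Value A M → Value A (.gen α M)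
  | inst : A ≠ [] → Value A M → Value A (.inst M B)
  | escape : A ≠ [] → Value A M → Value (A ++ [α]) (.escape α M)
  | csp : Value A M → Value (A ++ [α]) (.csp α M)

/-- Evaluation contexts `E^A_B` (a context at stage `A` whose hole is at stage `B`),
represented as term-level functions. -/
inductive EC : Stage → Stage → (Tm → Tm) → Prop where
  | hole : EC B B id
  | appL : EC A B E → EC A B (fun t => Tm.app (E t) M)
  | appR : Value A v → EC A B E → EC A B (fun t => Tm.app v (E t))
  | quote : EC (A ++ [α]) B E → EC A B (fun t => Tm.quote α (E t))
  | gen : EC A B E → EC A B (fun t => Tm.gen α (E t))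
  | inst : EC A B E → EC A B (fun t => Tm.inst (E t) C)
  | lam : A ≠ [] → EC A B E → EC A B (fun t => Tm.lam x τ (E t))
  | escape : A ≠ [] → EC A B E → EC (A ++ [α]) B (fun t => Tm.escape α (E t))
  | csp : EC A B E → EC (A ++ [α]) B (fun t => Tm.csp α (E t))

/-- Redexes: `R^ε ::= (λx:τ.M) v^ε | (Λα.v^ε) ε` and `R^α ::= ◂_α ▸_α v^α`. -/
inductive Redex : Stage → Tm → Prop where
  | beta : Value [] v → Redex [] (.app (.lam x τ M) v)
  | lamApp : Value [] v → Redex [] (.inst (.gen α v) [])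
  | splice : Value [α] v → Redex [α] (.escape α (.quote α v))

/-- Staged reduction `M →s N`. -/
inductive SRed : Tm → Tm → Prop where
  | beta : EC A [] E → Value [] v →
      SRed (E (.app (.lam x τ M) v)) (E (substTm M x v))
  | lamApp : EC A [] E → Value [] v →
      SRed (E (.inst (.gen α v) C)) (E (ssubTm v α C))
  | splice : EC A [α] E → Value [α] v →
      SRed (E (.escape α (.quote α v))) (E v)

/-! ### The simply typed λ-calculus and the ♮-translation -/

/-- Simple types. -/
inductive STy : Type where
  | base (X : String) : STy
  | arr (a b : STy) : STy

/-- Terms of the simply typed λ-calculus. -/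
inductive STm : Type where
  | const (c : String) : STm
  | var (x : String) : STm
  | lam (x : String) (τ : STy) (M : STm) : STm
  | app (M N : STm) : STm

/-- Substitution in the simply typed λ-calculus. -/
def substSTm : STm → String → STm → STm
  | .const c, _, _ => .const c
  | .var y, z, P => if y = z then P else .var y
  | .lam y τ M, z, P => .lam y τ (if y = z then M else substSTm M z P)
  | .app M N, z, P => .app (substSTm M z P) (substSTm N z P)

/-- β-reduction in the simply typed λ-calculus. -/
inductive SBeta : STm → STm → Prop where
  | beta : SBeta (.app (.lam x τ M) N) (substSTm M x N)
  | lam : SBeta M M' → SBeta (.lam x τ M) (.lam x τ M')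
  | appL : SBeta M M' → SBeta (.app M N) (.app M' N)
  | appR : SBeta N N' → SBeta (.app M N) (.app M N')

/-- Typing for the simply typed λ-calculus (with a signature of constants). -/
inductive STyping : List (String × STy) → List (String × STy) → STm → STy → Prop where
  | const : (c, τ) ∈ S → STyping S Γ (.const c) τ
  | var : (x, τ) ∈ Γ → STyping S Γ (.var x) τ
  | lam : STyping S (Γ ++ [(x, τ)]) M σ → STyping S Γ (.lam x τ M) (.arr τ σ)
  | app : STyping S Γ M (.arr τ σ) → STyping S Γ N τ → STyping S Γ (.app M N) σ

/-- The ♮-translation on types. -/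
def natTy : Ty → STy
  | .const X => .base X
  | .pi _ τ σ => .arr (natTy τ) (natTy σ)
  | .app τ _ => natTy τ
  | .code _ τ => natTy τ
  | .all _ τ => natTy τ

/-- The ♮-translation on terms. -/
def natTm : Tm → STm
  | .const c => .const c
  | .var x => .var x
  | .lam x τ M => .lam x (natTy τ) (natTm M)
  | .app M N => .app (natTm M) (natTm N)
  | .quote _ M => natTm M
  | .escape _ M => natTm M
  | .gen _ M => natTm M
  | .inst M _ => natTm M
  | .csp _ M => natTm M

/-- The ♮-translation on environments (dropping stage annotations). -/
def natCtx (Γ : Ctx) : List (String × STy) := Γ.map (fun e => (e.1, natTy e.2.1))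

/-- The ♮-translation on signatures. -/
def natSig (S : Sig) : List (String × STy) := S.consts.map (fun e => (e.1, natTy e.2))

end LMD

/-! The ♮-translation erases every staging construct and all type dependency, so it commutes
with substitution. Hence a root β-step of λMD is sent to a root β-step, a congruence step under
a λ or an application to the same congruence step, and a step under a bracket, escape, CSP or
stage abstraction/application to the image of the inner step: each β-step is simulated by
exactly one β-step. -/

namespace LMD

theorem natTy_substTy : ∀ (τ : Ty) (z : String) (P : Tm), natTy (substTy τ z P) = natTy τ
  | .const _, _, _ => rfl
  | .pi y τ σ, z, P => by
      simp only [substTy, natTy, natTy_substTy τ z P]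
      split_ifs <;> simp only [natTy_substTy σ z P]
  | .app τ _, z, P => natTy_substTy τ z P
  | .code _ τ, z, P => natTy_substTy τ z P
  | .all _ τ, z, P => natTy_substTy τ z P

theorem natTm_substTm : ∀ (M : Tm) (z : String) (P : Tm),
    natTm (substTm M z P) = substSTm (natTm M) z (natTm P)
  | .const _, _, _ => rfl
  | .var y, z, P => by
      simp only [substTm, natTm, substSTm]
      split_ifs <;> rfl
  | .lam y τ M, z, P => by
      simp only [substTm, natTm, substSTm, natTy_substTy]
      split_ifs <;> simp only [natTm_substTm M z P]
  | .app M N, z, P => by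
      simp only [substTm, natTm, substSTm, natTm_substTm M z P, natTm_substTm N z P]
  | .quote _ M, z, P => natTm_substTm M z P
  | .escape _ M, z, P => natTm_substTm M z P
  | .gen _ M, z, P => natTm_substTm M z P
  | .inst M _, z, P => natTm_substTm M z P
  | .csp _ M, z, P => natTm_substTm M z P

theorem sBeta_natTm_of_redB {M N : Tm} (h : RedB M N) : SBeta (natTm M) (natTm N) := by
  induction h with
  | beta =>
      rw [natTm, natTm, natTm_substTm]
      exact .beta
  | lam _ ih => exact .lam ih
  | appL _ ih => exact .appL ih
  | appR _ ih => exact .appR ih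
  | quote _ ih | escape _ ih | gen _ ih | inst _ ih | csp _ ih => exact ih

/-- **Simulation of β-reduction by the ♮-translation**: if `Γ ⊢ M : τ @A`
and `M →β N` in λMD, then `♮(M) →β⁺ ♮(N)` (one or more β-steps) in the
simply typed λ-calculus. -/
theorem natural_simulates_beta {S : Sig} {Γ : Ctx} {M N : Tm} {τ : Ty}
    {A : Stage} (hty : Typing S Γ M τ A) (hred : RedB M N) :
    Relation.TransGen SBeta (natTm M) (natTm N) :=
  .single (sBeta_natTm_of_redB hred)

end LMD
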